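/- arXiv:2602.12861 — 2 statements merged into one kernel-verified Lean document; each statement's English description precedes it below -/
import Mathlib

section
/- Let L be an FDD-lattice. Then the compact elements of the dcpo pt(L) are exactly the maps γ_a with a ∈ Cp(L); that is, K(pt(L)) = {γ_a : a ∈ Cp(L)}. -/
section Domains

variable (P : Type*) [PartialOrder P]

/-- A dcpo: every nonempty directed subset has a least upper bound. -/
def DirectedComplete : Prop :=
  ∀ D : Set P, D.Nonempty → DirectedOn (· ≤ ·) D → ∃ s, IsLUB D s

variable {P}

/-- A compact (finite) element of a poset. -/
def IsCompactElt (k : P) : Prop :=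
  ∀ D : Set P, D.Nonempty → DirectedOn (· ≤ ·) D → ∀ s : P, IsLUB D s → k ≤ s →
    ∃ d ∈ D, k ≤ d

/-- A Scott-open subset: an upper set inaccessible by directed suprema. -/
def ScottOpen (U : Set P) : Prop :=
  IsUpperSet U ∧ ∀ D : Set P, D.Nonempty → DirectedOn (· ≤ ·) D → ∀ s : P, IsLUB D s →
    s ∈ U → (D ∩ U).Nonempty

/-- Compactness of a set with respect to covers by Scott-open sets. -/
def ScottCompactSet (K : Set P) : Prop :=
  ∀ C : Set (Set P), (∀ V ∈ C, ScottOpen V) → K ⊆ ⋃₀ C →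
    ∃ F : Finset (Set P), ↑F ⊆ C ∧ K ⊆ ⋃₀ (F : Set (Set P))

variable (P)

/-- The collection of compact-open subsets (w.r.t. the Scott topology). -/
def CO : Set (Set P) := {U | ScottOpen U ∧ ScottCompactSet U}

/-- An algebraic domain: a dcpo in which, for every `x`, the set of compact elements
below `x` is a (nonempty) directed set with least upper bound `x`. -/
def IsAlgebraicDomain : Prop :=
  DirectedComplete P ∧
  ∀ x : P,
    (Set.Iic x ∩ {k | IsCompactElt k}).Nonempty ∧
    DirectedOn (· ≤ ·) (Set.Iic x ∩ {k | IsCompactElt k}) ∧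
    IsLUB (Set.Iic x ∩ {k | IsCompactElt k}) x

/-- Every principal ideal `↓x` is a complete lattice in the induced order
(equivalently: every subset of `↓x` has a least upper bound inside `↓x`). -/
def PrincipalIdealsComplete : Prop :=
  ∀ x : P, ∀ S : Set P, S ⊆ Set.Iic x →
    ∃ s, s ≤ x ∧ (∀ a ∈ S, a ≤ s) ∧ ∀ u, u ≤ x → (∀ a ∈ S, a ≤ u) → s ≤ u

/-- An algebraic L-domain. -/
def IsAlgebraicLDomain : Prop := IsAlgebraicDomain P ∧ PrincipalIdealsComplete P

/-- The Lawson topology: generated by the Scott-open sets together with complements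
of principal filters. -/
def lawsonTopology : TopologicalSpace P :=
  TopologicalSpace.generateFrom ({U | ScottOpen U} ∪ {U | ∃ x : P, U = (Set.Ici x)ᶜ})

/-- Lawson compactness: compactness in the Lawson topology. -/
def LawsonCompact : Prop := @CompactSpace P (lawsonTopology P)

end Domains

section FDD

variable {L : Type*} [Lattice L] [BoundedOrder L]

/-- A nonzero co-prime element. -/
def CoprimeElt (a : L) : Prop :=
  a ≠ ⊥ ∧ ∀ x y : L, a ≤ x ⊔ y → a ≤ x ∨ a ≤ y

/-- A finitely disjunctive distributive lattice (FDD-lattice): a bounded distributive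
lattice in which (1) every element is a finite join of nonzero co-primes, and
(2) the meet of two nonzero co-primes is a finite join of pairwise disjoint
nonzero co-primes. -/
def IsFDD (L : Type*) [DistribLattice L] [BoundedOrder L] : Prop :=
  (∀ x : L, ∃ F : Finset L, (∀ a ∈ F, CoprimeElt a) ∧ x = F.sup id) ∧
  (∀ a b : L, CoprimeElt a → CoprimeElt b →
    ∃ F : Finset L, (∀ c ∈ F, CoprimeElt c) ∧
      (∀ c ∈ F, ∀ d ∈ F, c ≠ d → c ⊓ d = ⊥) ∧ a ⊓ b = F.sup id)

/-- A point of a bounded lattice: a lattice homomorphism into the two-element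
bounded lattice `Bool` preserving `0`, `1`, binary meets and binary joins. -/
def IsPoint (p : L → Bool) : Prop :=
  p ⊥ = false ∧ p ⊤ = true ∧
  (∀ x y : L, p (x ⊓ y) = (p x && p y)) ∧
  (∀ x y : L, p (x ⊔ y) = (p x || p y))

end FDD

/-- The poset of points of a bounded lattice, with the pointwise order. -/
def Pt (L : Type*) [Lattice L] [BoundedOrder L] : Type _ :=
  {p : L → Bool // IsPoint p}

noncomputable instance (L : Type*) [Lattice L] [BoundedOrder L] : PartialOrder (Pt L) :=
  inferInstanceAs (PartialOrder {p : L → Bool // IsPoint p})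

/-- `γ_a : L → {0,1}`, `γ_a x = 1` iff `a ≤ x`. -/
noncomputable def gammaPt {L : Type*} [Lattice L] [BoundedOrder L] (a : L) : L → Bool :=
  fun x => @decide (a ≤ x) (Classical.propDecidable _)

/-- A bounded lattice homomorphism. -/
def IsBLH {L M : Type*} [Lattice L] [BoundedOrder L] [Lattice M] [BoundedOrder M]
    (f : L → M) : Prop :=
  f ⊥ = ⊥ ∧ f ⊤ = ⊤ ∧ (∀ x y, f (x ⊓ y) = f x ⊓ f y) ∧ (∀ x y, f (x ⊔ y) = f x ⊔ f y)

/-!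
Directed suprema in `pt(L)` are computed pointwise, so `γ_a ≤ ⋁D` forces some `d ∈ D` to be
true at `a`, i.e. `γ_a ≤ d`. Conversely, when every element is a finite join of co-primes, a
point `q` is the directed supremum of the `γ_a` with `a` co-prime and `q a = 1`: for two such
`a, b`, the point `q` is true at `a ⊓ b`, hence at one of the co-primes whose join it is. A
compact `q` then lies below, hence equals, one of these `γ_a`.
-/

section

variable {L : Type*} [Lattice L] [BoundedOrder L]

theorem isPoint_of_eq_true_iff {p : L → Bool} (hbot : p ⊥ ≠ true) (htop : p ⊤ = true)
    (hinf : ∀ x y, p (x ⊓ y) = true ↔ p x = true ∧ p y = true)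
    (hsup : ∀ x y, p (x ⊔ y) = true ↔ p x = true ∨ p y = true) : IsPoint p :=
  ⟨by simpa using hbot, htop, fun x y => Bool.eq_iff_iff.2 (by simpa using hinf x y),
    fun x y => Bool.eq_iff_iff.2 (by simpa using hsup x y)⟩

namespace IsPoint

variable {p : L → Bool}

theorem apply_bot_ne_true (hp : IsPoint p) : p ⊥ ≠ true := by simp [hp.1]

theorem apply_inf_eq_true (hp : IsPoint p) {x y : L} :
    p (x ⊓ y) = true ↔ p x = true ∧ p y = true := by
  rw [hp.2.2.1, Bool.and_eq_true]

theorem apply_sup_eq_true (hp : IsPoint p) {x y : L} :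
    p (x ⊔ y) = true ↔ p x = true ∨ p y = true := by
  rw [hp.2.2.2, Bool.or_eq_true]

theorem apply_eq_true_of_le (hp : IsPoint p) {x y : L} (hxy : x ≤ y) (hx : p x = true) :
    p y = true := by
  rw [← sup_eq_right.2 hxy, hp.apply_sup_eq_true]
  exact Or.inl hx

theorem exists_mem_of_apply_finsetSup (hp : IsPoint p) {F : Finset L}
    (hF : p (F.sup id) = true) :
    ∃ a ∈ F, p a = true :=
  F.sup_induction (p := fun x => p x = true → ∃ a ∈ F, p a = true)
    (fun h => absurd h hp.apply_bot_ne_true)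
    (fun _ ih₁ _ ih₂ h => (hp.apply_sup_eq_true.1 h).elim ih₁ ih₂)
    (fun a ha h => ⟨a, ha, h⟩) hF

end IsPoint

theorem gammaPt_eq_true {a x : L} : gammaPt a x = true ↔ a ≤ x := by
  simp [gammaPt]

theorem isPoint_gammaPt {a : L} (ha : CoprimeElt a) : IsPoint (gammaPt a) := by
  refine isPoint_of_eq_true_iff ?_ (gammaPt_eq_true.2 le_top) (fun x y => ?_) (fun x y => ?_)
  · exact fun h => ha.1 (le_bot_iff.1 (gammaPt_eq_true.1 h))
  · simp only [gammaPt_eq_true, le_inf_iff]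
  · simp only [gammaPt_eq_true]
    exact ⟨ha.2 x y, fun h => h.elim le_sup_of_le_left le_sup_of_le_right⟩

namespace Pt

theorem le_iff {p q : Pt L} : p ≤ q ↔ ∀ x, p.1 x = true → q.1 x = true :=
  Pi.le_def.trans (forall_congr' fun _ => Bool.le_iff_imp)

theorem le_iff_of_val_eq_gammaPt {a : L} {r p : Pt L} (hr : r.1 = gammaPt a) :
    r ≤ p ↔ p.1 a = true := by
  rw [le_iff, hr]
  refine ⟨fun h => h a (gammaPt_eq_true.2 le_rfl), fun ha x hx => ?_⟩
  exact p.2.apply_eq_true_of_le (gammaPt_eq_true.1 hx) ha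

open Classical in
noncomputable def dirSup (D : Set (Pt L)) : L → Bool :=
  fun x => decide (∃ p ∈ D, p.1 x = true)

theorem dirSup_eq_true {D : Set (Pt L)} {x : L} :
    dirSup D x = true ↔ ∃ p ∈ D, p.1 x = true := by
  simp [dirSup]

theorem isPoint_dirSup {D : Set (Pt L)} (hne : D.Nonempty) (hdir : DirectedOn (· ≤ ·) D) :
    IsPoint (dirSup D) := by
  refine isPoint_of_eq_true_iff ?_ ?_ (fun x y => ?_) (fun x y => ?_) <;>
    simp only [ne_eq, dirSup_eq_true]
  · rintro ⟨p, -, hp⟩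
    exact p.2.apply_bot_ne_true hp
  · obtain ⟨p, hp⟩ := hne
    exact ⟨p, hp, p.2.2.1⟩
  · refine ⟨fun ⟨p, hp, hxy⟩ => ?_, fun ⟨⟨p, hp, hx⟩, ⟨q, hq, hy⟩⟩ => ?_⟩
    · exact (p.2.apply_inf_eq_true.1 hxy).imp (fun hx => ⟨p, hp, hx⟩) (fun hy => ⟨p, hp, hy⟩)
    · obtain ⟨r, hr, hpr, hqr⟩ := hdir p hp q hq
      exact ⟨r, hr, r.2.apply_inf_eq_true.2 ⟨le_iff.1 hpr x hx, le_iff.1 hqr y hy⟩⟩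
  · refine ⟨fun ⟨p, hp, hxy⟩ => ?_, ?_⟩
    · exact (p.2.apply_sup_eq_true.1 hxy).imp (fun hx => ⟨p, hp, hx⟩) (fun hy => ⟨p, hp, hy⟩)
    · rintro (⟨p, hp, h⟩ | ⟨p, hp, h⟩) <;>
        exact ⟨p, hp, p.2.apply_sup_eq_true.2 (by simp [h])⟩

theorem isLUB_dirSup {D : Set (Pt L)} (hne : D.Nonempty) (hdir : DirectedOn (· ≤ ·) D) :
    IsLUB D ⟨dirSup D, isPoint_dirSup hne hdir⟩ :=
  ⟨fun p hp => le_iff.2 fun _ hx => dirSup_eq_true.2 ⟨p, hp, hx⟩,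
    fun _ hu => le_iff.2 fun x hx =>
      let ⟨_, hp, hpx⟩ := dirSup_eq_true.1 hx
      le_iff.1 (hu hp) x hpx⟩

theorem val_eq_true_iff_of_isLUB {D : Set (Pt L)} (hne : D.Nonempty) (hdir : DirectedOn (· ≤ ·) D)
    {s : Pt L} (hs : IsLUB D s) {x : L} : s.1 x = true ↔ ∃ p ∈ D, p.1 x = true := by
  rw [hs.unique (isLUB_dirSup hne hdir)]
  exact dirSup_eq_true

theorem isCompactElt_of_val_eq_gammaPt {a : L} {q : Pt L} (hq : q.1 = gammaPt a) :
    IsCompactElt q := by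
  intro D hne hdir s hs hqs
  obtain ⟨p, hp, hpa⟩ :=
    (val_eq_true_iff_of_isLUB hne hdir hs).1 ((le_iff_of_val_eq_gammaPt hq).1 hqs)
  exact ⟨p, hp, (le_iff_of_val_eq_gammaPt hq).2 hpa⟩

end Pt

def CoprimeGenerated (L : Type*) [Lattice L] [BoundedOrder L] : Prop :=
  ∀ x : L, ∃ F : Finset L, (∀ a ∈ F, CoprimeElt a) ∧ x = F.sup id

theorem CoprimeGenerated.exists_coprime_le (hL : CoprimeGenerated L) {p : L → Bool}
    (hp : IsPoint p) {x : L} (hx : p x = true) : ∃ a, CoprimeElt a ∧ a ≤ x ∧ p a = true := by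
  obtain ⟨F, hF, rfl⟩ := hL x
  obtain ⟨a, haF, hpa⟩ := hp.exists_mem_of_apply_finsetSup hx
  exact ⟨a, hF a haF, F.le_sup (f := id) haF, hpa⟩

namespace Pt

def gammaBelow (q : Pt L) : Set (Pt L) :=
  {r | ∃ a, CoprimeElt a ∧ q.1 a = true ∧ r.1 = gammaPt a}

variable {q : Pt L}

theorem gamma_mem_gammaBelow {a : L} (ha : CoprimeElt a) (hqa : q.1 a = true) :
    ⟨gammaPt a, isPoint_gammaPt ha⟩ ∈ gammaBelow q :=
  ⟨a, ha, hqa, rfl⟩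

theorem gammaBelow_nonempty (hL : CoprimeGenerated L) : (gammaBelow q).Nonempty :=
  let ⟨_, ha, _, hqa⟩ := hL.exists_coprime_le q.2 q.2.2.1
  ⟨_, gamma_mem_gammaBelow ha hqa⟩

theorem directedOn_gammaBelow (hL : CoprimeGenerated L) :
    DirectedOn (· ≤ ·) (gammaBelow q) := by
  rintro r₁ ⟨a, -, hqa, hr₁⟩ r₂ ⟨b, -, hqb, hr₂⟩
  obtain ⟨c, hc, hcab, hqc⟩ := hL.exists_coprime_le q.2 (q.2.apply_inf_eq_true.2 ⟨hqa, hqb⟩)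
  refine ⟨_, gamma_mem_gammaBelow hc hqc, (le_iff_of_val_eq_gammaPt hr₁).2 ?_,
    (le_iff_of_val_eq_gammaPt hr₂).2 ?_⟩
  · exact gammaPt_eq_true.2 (hcab.trans inf_le_left)
  · exact gammaPt_eq_true.2 (hcab.trans inf_le_right)

theorem isLUB_gammaBelow (hL : CoprimeGenerated L) : IsLUB (gammaBelow q) q := by
  refine ⟨fun r ⟨_, _, hqa, hr⟩ => (le_iff_of_val_eq_gammaPt hr).2 hqa, fun u hu => ?_⟩
  refine le_iff.2 fun x hx => ?_
  obtain ⟨a, ha, hax, hqa⟩ := hL.exists_coprime_le q.2 hx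
  have hua : u.1 a = true :=
    (le_iff_of_val_eq_gammaPt rfl).1 (hu (gamma_mem_gammaBelow ha hqa))
  exact u.2.apply_eq_true_of_le hax hua

theorem exists_val_eq_gammaPt_of_isCompactElt (hL : CoprimeGenerated L)
    (hq : IsCompactElt q) :
    ∃ a, CoprimeElt a ∧ q.1 = gammaPt a := by
  obtain ⟨r, hr, hqr⟩ := hq _ (gammaBelow_nonempty hL) (directedOn_gammaBelow hL) q
    (isLUB_gammaBelow hL) le_rfl
  have hrq : r ≤ q := (isLUB_gammaBelow hL).1 hr
  obtain ⟨a, ha, -, hra⟩ := hr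
  exact ⟨a, ha, le_antisymm hqr hrq ▸ hra⟩

end Pt

end

/-- For an FDD-lattice `L`, the compact elements of the dcpo `Pt L` are
exactly the maps `γ_a` with `a` a nonzero co-prime of `L`. -/
theorem stmt7 {L : Type*} [DistribLattice L] [BoundedOrder L] (hL : IsFDD L) :
    {q : Pt L | IsCompactElt q} =
      {q : Pt L | ∃ a : L, CoprimeElt a ∧ q.1 = gammaPt a} := by
  ext q
  exact ⟨Pt.exists_val_eq_gammaPt_of_isCompactElt hL.1,
    fun ⟨_, _, hq⟩ => Pt.isCompactElt_of_val_eq_gammaPt hq⟩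
end

section
/- Every Lawson compact algebraic L-domain M, as a topological space with its Scott topology, is coherent: the compact-open subsets of M form a basis of the Scott topology that is closed under finite intersections, so that CO(M) is a distributive sublattice of the frame of Scott-open sets. -/
/-!
In an algebraic domain every Scott-open set is a union of principal filters `↑k` of compact
elements, and each such `↑k` is compact-open. Hence a compact-open set is a finite union of
principal filters, so it is Lawson-closed. When the Lawson topology is compact, Lawson-closed
sets are Lawson-compact, hence Scott-compact because the Lawson topology refines the Scott
topology. Finite unions and intersections of Lawson-closed sets are Lawson-closed, so the
compact-open sets are closed under both.
-/

open Set Topology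

section ScottTopology

variable {M : Type*} [PartialOrder M]

theorem ScottOpen.inter {U V : Set M} (hU : ScottOpen U) (hV : ScottOpen V) :
    ScottOpen (U ∩ V) := by
  refine ⟨hU.1.inter hV.1, fun D hne hdir s hs hsUV => ?_⟩
  obtain ⟨d₁, hd₁D, hd₁U⟩ := hU.2 D hne hdir s hs hsUV.1
  obtain ⟨d₂, hd₂D, hd₂V⟩ := hV.2 D hne hdir s hs hsUV.2
  obtain ⟨d, hdD, hd₁d, hd₂d⟩ := hdir d₁ hd₁D d₂ hd₂D
  exact ⟨d, hdD, hU.1 hd₁d hd₁U, hV.1 hd₂d hd₂V⟩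

theorem ScottOpen.union {U V : Set M} (hU : ScottOpen U) (hV : ScottOpen V) :
    ScottOpen (U ∪ V) := by
  refine ⟨hU.1.union hV.1, fun D hne hdir s hs hsUV => ?_⟩
  rcases hsUV with hsU | hsV
  · exact (hU.2 D hne hdir s hs hsU).mono (inter_subset_inter_right D subset_union_left)
  · exact (hV.2 D hne hdir s hs hsV).mono (inter_subset_inter_right D subset_union_right)

theorem scottOpen_univ : ScottOpen (univ : Set M) :=
  ⟨isUpperSet_univ, fun _ hne _ _ _ _ => by rwa [inter_univ]⟩

theorem scottOpen_empty : ScottOpen (∅ : Set M) :=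
  ⟨isUpperSet_empty, fun _ _ _ _ _ h => h.elim⟩

theorem IsCompactElt.scottOpen_Ici {k : M} (hk : IsCompactElt k) : ScottOpen (Ici k) :=
  ⟨isUpperSet_Ici k, fun D hne hdir s hs hks => hk D hne hdir s hs hks⟩

theorem scottCompactSet_Ici (k : M) : ScottCompactSet (Ici k) := by
  intro C hC hcov
  obtain ⟨V, hVC, hkV⟩ := hcov (le_refl k)
  exact ⟨{V}, by simpa using hVC, fun x hx => ⟨V, by simp, (hC V hVC).1 hx hkV⟩⟩

theorem IsAlgebraicDomain.exists_isCompactElt_le_mem (h : IsAlgebraicDomain M) {U : Set M}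
    (hU : ScottOpen U) {x : M} (hx : x ∈ U) : ∃ k, IsCompactElt k ∧ k ≤ x ∧ k ∈ U := by
  obtain ⟨hne, hdir, hlub⟩ := h.2 x
  obtain ⟨k, ⟨hkx, hk⟩, hkU⟩ := hU.2 _ hne hdir x hlub hx
  exact ⟨k, hk, hkx, hkU⟩

theorem IsAlgebraicDomain.exists_finset_eq_biUnion_Ici (h : IsAlgebraicDomain M) {U : Set M}
    (hU : U ∈ CO M) : ∃ F : Finset M, (∀ k ∈ F, IsCompactElt k) ∧ U = ⋃ k ∈ F, Ici k := by
  classical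
  obtain ⟨hUo, hUc⟩ := hU
  obtain ⟨F, hFC, hUF⟩ := hUc (Ici '' {k | IsCompactElt k ∧ k ∈ U})
    (by rintro _ ⟨k, ⟨hk, -⟩, rfl⟩; exact hk.scottOpen_Ici)
    (fun x hx => by
      obtain ⟨k, hk, hkx, hkU⟩ := h.exists_isCompactElt_le_mem hUo hx
      exact ⟨Ici k, ⟨k, ⟨hk, hkU⟩, rfl⟩, hkx⟩)
  obtain ⟨F, hFU, rfl⟩ := Finset.subset_set_image_iff.1 hFC
  rw [Finset.coe_image, sUnion_image] at hUF
  refine ⟨F, fun k hk => (hFU hk).1, hUF.antisymm ?_⟩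
  exact iUnion₂_subset fun k hk => hUo.1.Ici_subset (hFU hk).2

end ScottTopology

section LawsonTopology

variable {M : Type*} [PartialOrder M]

theorem ScottOpen.isOpen_lawson {U : Set M} (hU : ScottOpen U) : IsOpen[lawsonTopology M] U :=
  TopologicalSpace.GenerateOpen.basic U (Or.inl hU)

theorem isClosed_lawson_Ici (x : M) : IsClosed[lawsonTopology M] (Ici x) :=
  @IsClosed.mk M (lawsonTopology M) _ (TopologicalSpace.GenerateOpen.basic _ (Or.inr ⟨x, rfl⟩))

theorem LawsonCompact.scottCompactSet (h : LawsonCompact M) {S : Set M}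
    (hS : IsClosed[lawsonTopology M] S) : ScottCompactSet S := by
  let _ := lawsonTopology M
  have : CompactSpace M := h
  intro C hC hcov
  rw [sUnion_eq_biUnion] at hcov
  obtain ⟨F, hFC, hF, hSF⟩ :=
    hS.isCompact.elim_finite_subcover_image (fun V hV => (hC V hV).isOpen_lawson) hcov
  exact ⟨hF.toFinset, by simpa using hFC, by simpa [sUnion_eq_biUnion] using hSF⟩

theorem IsAlgebraicDomain.isClosed_lawson_of_mem_CO (h : IsAlgebraicDomain M) {U : Set M}
    (hU : U ∈ CO M) : IsClosed[lawsonTopology M] U := by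
  let _ := lawsonTopology M
  obtain ⟨F, -, rfl⟩ := h.exists_finset_eq_biUnion_Ici hU
  exact F.finite_toSet.isClosed_biUnion fun k _ => isClosed_lawson_Ici k

end LawsonTopology

/-- Every Lawson compact algebraic L-domain `M`, with its Scott topology,
is coherent: the compact-open sets form a basis of the Scott topology closed under
finite intersections, so `CO M` is a (bounded, distributive) sublattice of the Scott
opens. -/
theorem stmt14 {M : Type*} [PartialOrder M]
    (h1 : IsAlgebraicLDomain M) (h2 : LawsonCompact M) :
    (∀ U : Set M, ScottOpen U → ∀ x ∈ U, ∃ V ∈ CO M, x ∈ V ∧ V ⊆ U) ∧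
    (∀ U ∈ CO M, ScottOpen U) ∧
    (Set.univ : Set M) ∈ CO M ∧ (∅ : Set M) ∈ CO M ∧
    (∀ U ∈ CO M, ∀ V ∈ CO M, U ∩ V ∈ CO M ∧ U ∪ V ∈ CO M) := by
  let _ := lawsonTopology M
  have halg := h1.1
  refine ⟨fun U hU x hx => ?_, fun U hU => hU.1,
    ⟨scottOpen_univ, h2.scottCompactSet isClosed_univ⟩,
    ⟨scottOpen_empty, h2.scottCompactSet isClosed_empty⟩, fun U hU V hV => ⟨?_, ?_⟩⟩
  · obtain ⟨k, hk, hkx, hkU⟩ := halg.exists_isCompactElt_le_mem hU hx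
    exact ⟨Ici k, ⟨hk.scottOpen_Ici, scottCompactSet_Ici k⟩, hkx, hU.1.Ici_subset hkU⟩
  · exact ⟨hU.1.inter hV.1, h2.scottCompactSet
      ((halg.isClosed_lawson_of_mem_CO hU).inter (halg.isClosed_lawson_of_mem_CO hV))⟩
  · exact ⟨hU.1.union hV.1, h2.scottCompactSet
      ((halg.isClosed_lawson_of_mem_CO hU).union (halg.isClosed_lawson_of_mem_CO hV))⟩
end
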